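/- For every integer n ≥ 0 and every x ∈ (−1,1), the Hadamard finite part (1/π)·lim_{ρ→0⁺} [ ∫_{{y ∈ (−1,1) : |y−x| > ρ}} U_n(y)·√(1−y²)/(y−x)² dy − 2·U_n(x)·√(1−x²)/ρ ] equals −(n+1)·U_n(x). -/

import Mathlib

/-!
Write `x = cos φ` and `θ± = arccos (x ± ρ)`. Substituting `y = cos θ` turns `U_n(y) √(1 - y²) dy`
into `sin ((n + 1) θ) sin θ dθ` and the truncated domain into `(0, θ₊) ∪ (θ₋, π)`. Integrating by
parts against `sin θ / (cos θ - x)² = d/dθ (1 / (cos θ - x))` produces the boundary terms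
`(sin ((n + 1) θ₊) + sin ((n + 1) θ₋)) / ρ`, which cancel the counterterm
`2 U_n(x) √(1 - x²) / ρ = 2 sin ((n + 1) φ) / ρ` up to a symmetric second difference quotient
tending to `0`, and `-(n + 1)` times the principal value of
`∫₀^π cos ((n + 1) θ) / (cos θ - cos φ) dθ`. That is Glauert's integral
`π sin ((n + 1) φ) / sin φ = π U_n(x)`: it follows from the three-term recurrence of `cos (m θ)`
once the principal value of `∫₀^π 1 / (cos θ - cos φ) dθ` is shown to vanish using an explicit
primitive.
-/

open MeasureTheory Filter Set Polynomial Real Topology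

namespace Real

lemma lt_cos_iff_lt_arccos {θ a : ℝ} (hθ : θ ∈ Icc 0 π) (ha : -1 ≤ a) :
    a < cos θ ↔ θ < arccos a := by
  rcases le_or_gt a 1 with ha1 | ha1
  · rw [← Real.strictAntiOn_arccos.lt_iff_gt ⟨neg_one_le_cos θ, cos_le_one θ⟩ ⟨ha, ha1⟩,
      arccos_cos hθ.1 hθ.2]
  · rw [arccos_of_one_le ha1.le]
    exact iff_of_false (by linarith [cos_le_one θ]) (by linarith [hθ.1])

lemma cos_lt_iff_arccos_lt {θ b : ℝ} (hθ : θ ∈ Icc 0 π) (hb : b ≤ 1) :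
    cos θ < b ↔ arccos b < θ := by
  have hθ' : π - θ ∈ Icc 0 π := ⟨by linarith [hθ.2], by linarith [hθ.1]⟩
  rw [← neg_lt_neg_iff, ← cos_pi_sub, lt_cos_iff_lt_arccos hθ' (by linarith), arccos_neg]
  constructor <;> intro h <;> linarith

lemma lt_cos_of_mem_Icc_arccos_add {x ρ θ : ℝ} (hx : -1 ≤ x) (hρ : 0 < ρ) (hup : x + ρ ≤ 1)
    (hθ : θ ∈ Icc 0 (arccos (x + ρ))) : x < cos θ := by
  have := cos_le_cos_of_nonneg_of_le_pi hθ.1 (arccos_le_pi _) hθ.2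
  rw [cos_arccos (by linarith) hup] at this
  linarith

lemma cos_lt_of_mem_Icc_arccos_sub {x ρ θ : ℝ} (hx : x ≤ 1) (hρ : 0 < ρ) (hlo : -1 ≤ x - ρ)
    (hθ : θ ∈ Icc (arccos (x - ρ)) π) : cos θ < x := by
  have := cos_le_cos_of_nonneg_of_le_pi (arccos_nonneg _) hθ.2 hθ.1
  rw [cos_arccos hlo (by linarith)] at this
  linarith

end Real

lemma Polynomial.Chebyshev.U_real_eval_mul_sqrt {x : ℝ} (hx : x ∈ Icc (-1) 1) (n : ℤ) :
    (U ℝ n).eval x * √(1 - x ^ 2) = sin ((n + 1) * arccos x) := by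
  rw [← U_real_cos, cos_arccos hx.1 hx.2, sin_arccos]

theorem integral_cos_image {E : Type*} [NormedAddCommGroup E] [NormedSpace ℝ E] {s : Set ℝ}
    (hs : MeasurableSet s) (hsπ : s ⊆ Icc 0 π) (g : ℝ → E) :
    ∫ y in cos '' s, g y = ∫ θ in s, sin θ • g (cos θ) := by
  rw [integral_image_eq_integral_abs_deriv_smul hs
    (fun θ _ => (hasDerivAt_cos θ).hasDerivWithinAt) (injOn_cos.mono hsπ)]
  refine setIntegral_congr_fun hs fun θ hθ => ?_
  rw [abs_neg, abs_of_nonneg (sin_nonneg_of_nonneg_of_le_pi (hsπ hθ).1 (hsπ hθ).2)]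

theorem HasDerivAt.tendsto_second_difference_div {h : ℝ → ℝ} {a d : ℝ} (hd : HasDerivAt h d a) :
    Tendsto (fun t => (h (a + t) + h (a - t) - 2 * h a) / t) (𝓝[≠] 0) (𝓝 0) := by
  have hslope := hasDerivAt_iff_tendsto_slope_zero.1 hd
  have hneg : Tendsto (fun t : ℝ => -t) (𝓝[≠] 0) (𝓝[≠] 0) := by
    rw [tendsto_iff_comap]; simp
  refine (sub_self d ▸ hslope.sub (hslope.comp hneg)).congr fun t => ?_
  simp only [Function.comp_apply, smul_eq_mul, ← sub_eq_add_neg, inv_neg]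
  ring

def excisedAngles (x ρ : ℝ) : Set ℝ := {θ | θ ∈ Ioo 0 π ∧ ρ < |cos θ - x|}

lemma measurableSet_excisedAngles (x ρ : ℝ) : MeasurableSet (excisedAngles x ρ) :=
  measurableSet_Ioo.inter
    (measurableSet_lt measurable_const (by fun_prop : Measurable fun θ => |cos θ - x|))

lemma excisedAngles_subset_Icc (x ρ : ℝ) : excisedAngles x ρ ⊆ Icc 0 π :=
  fun _ hθ => Ioo_subset_Icc_self hθ.1

lemma cos_image_excisedAngles (x ρ : ℝ) :
    cos '' excisedAngles x ρ = {y | y ∈ Ioo (-1) 1 ∧ ρ < |y - x|} := by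
  ext y
  constructor
  · rintro ⟨θ, ⟨hθ, hρ⟩, rfl⟩
    refine ⟨⟨?_, ?_⟩, hρ⟩
    · simpa using cos_lt_cos_of_nonneg_of_le_pi hθ.1.le le_rfl hθ.2
    · simpa using cos_lt_cos_of_nonneg_of_le_pi le_rfl hθ.2.le hθ.1
  · rintro ⟨hy, hρ⟩
    refine ⟨arccos y, ⟨⟨arccos_pos.2 hy.2, arccos_lt_pi.2 hy.1⟩, ?_⟩, cos_arccos hy.1.le hy.2.le⟩
    rwa [cos_arccos hy.1.le hy.2.le]

lemma excisedAngles_eq_union {x ρ : ℝ} (hx : x ∈ Icc (-1) 1) (hρ : 0 ≤ ρ) :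
    excisedAngles x ρ = Ioo 0 (arccos (x + ρ)) ∪ Ioo (arccos (x - ρ)) π := by
  ext θ
  simp only [excisedAngles, mem_ofPred_eq, mem_union, mem_Ioo, lt_abs]
  constructor
  · rintro ⟨hθ, h | h⟩
    · refine Or.inl ⟨hθ.1, (lt_cos_iff_lt_arccos (Ioo_subset_Icc_self hθ) ?_).1 ?_⟩ <;>
        linarith [hx.1]
    · refine Or.inr ⟨(cos_lt_iff_arccos_lt (Ioo_subset_Icc_self hθ) ?_).1 ?_, hθ.2⟩ <;>
        linarith [hx.2]
  · rintro (⟨h0, h⟩ | ⟨h, hπ⟩)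
    · have hθ : θ ∈ Icc 0 π := ⟨h0.le, h.le.trans (arccos_le_pi _)⟩
      exact ⟨⟨h0, h.trans_le (arccos_le_pi _)⟩,
        Or.inl (by linarith [(lt_cos_iff_lt_arccos hθ (by linarith [hx.1])).2 h])⟩
    · have hθ : θ ∈ Icc 0 π := ⟨(arccos_nonneg _).trans h.le, hπ.le⟩
      exact ⟨⟨(arccos_nonneg _).trans_lt h, hπ⟩,
        Or.inr (by linarith [(cos_lt_iff_arccos_lt hθ (by linarith [hx.2])).2 h])⟩

lemma integrableOn_excisedAngles {x ρ : ℝ} {f : ℝ → ℝ} (hρ : 0 < ρ)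
    (hf : ContinuousOn f {θ | cos θ ≠ x}) : IntegrableOn f (excisedAngles x ρ) := by
  have hK : IsCompact (Icc 0 π ∩ {θ | ρ ≤ |cos θ - x|}) :=
    isCompact_Icc.inter_right (isClosed_le continuous_const (by fun_prop))
  refine (ContinuousOn.integrableOn_compact hK (hf.mono fun θ hθ => ?_)).mono_set
    fun θ hθ => ⟨excisedAngles_subset_Icc x ρ hθ, hθ.2.le⟩
  exact sub_ne_zero.1 (abs_pos.1 (hρ.trans_le hθ.2))

lemma setIntegral_excisedAngles {x ρ : ℝ} {f : ℝ → ℝ} (hx : x ∈ Icc (-1) 1) (hρ : 0 ≤ ρ)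
    (hf : IntegrableOn f (excisedAngles x ρ)) :
    ∫ θ in excisedAngles x ρ, f θ =
      (∫ θ in 0..arccos (x + ρ), f θ) + ∫ θ in arccos (x - ρ)..π, f θ := by
  rw [excisedAngles_eq_union hx hρ] at hf ⊢
  have hdisj : Disjoint (Ioo 0 (arccos (x + ρ))) (Ioo (arccos (x - ρ)) π) :=
    (Iic_disjoint_Ioi (antitone_arccos (by linarith))).mono
      (Ioo_subset_Iio_self.trans Iio_subset_Iic_self) Ioo_subset_Ioi_self
  rw [setIntegral_union hdisj measurableSet_Ioo (hf.mono_set subset_union_left)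
      (hf.mono_set subset_union_right),
    intervalIntegral.integral_of_le (arccos_nonneg _),
    intervalIntegral.integral_of_le (arccos_le_pi _),
    integral_Ioc_eq_integral_Ioo, integral_Ioc_eq_integral_Ioo]

lemma eventually_pos_and_add_le_one_and_neg_one_le_sub {x : ℝ} (hx : x ∈ Ioo (-1) 1) :
    ∀ᶠ ρ in 𝓝[>] 0, 0 < ρ ∧ x + ρ ≤ 1 ∧ -1 ≤ x - ρ := by
  filter_upwards [self_mem_nhdsWithin,
    nhdsWithin_le_nhds (eventually_lt_nhds (show (0 : ℝ) < 1 - x by linarith [hx.2])),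
    nhdsWithin_le_nhds (eventually_lt_nhds (show (0 : ℝ) < x + 1 by linarith [hx.1]))]
    with ρ h0 h1 h2
  exact ⟨h0, by linarith, by linarith⟩

lemma setIntegral_excisedAngles_eq_sub {x ρ : ℝ} {F f : ℝ → ℝ} (hρ : 0 < ρ) (hup : x + ρ ≤ 1)
    (hlo : -1 ≤ x - ρ) (hF : ∀ θ ∈ Icc 0 π, cos θ ≠ x → HasDerivAt F (f θ) θ)
    (hf : ContinuousOn f {θ | cos θ ≠ x}) :
    ∫ θ in excisedAngles x ρ, f θ = F (arccos (x + ρ)) - F 0 + (F π - F (arccos (x - ρ))) := by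
  have hL : ∀ θ ∈ uIcc 0 (arccos (x + ρ)), θ ∈ Icc 0 π ∧ cos θ ≠ x := by
    intro θ hθ
    rw [uIcc_of_le (arccos_nonneg _)] at hθ
    exact ⟨⟨hθ.1, hθ.2.trans (arccos_le_pi _)⟩,
      (lt_cos_of_mem_Icc_arccos_add (by linarith) hρ hup hθ).ne'⟩
  have hR : ∀ θ ∈ uIcc (arccos (x - ρ)) π, θ ∈ Icc 0 π ∧ cos θ ≠ x := by
    intro θ hθ
    rw [uIcc_of_le (arccos_le_pi _)] at hθ
    exact ⟨⟨(arccos_nonneg _).trans hθ.1, hθ.2⟩,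
      (cos_lt_of_mem_Icc_arccos_sub (by linarith) hρ hlo hθ).ne⟩
  rw [setIntegral_excisedAngles ⟨by linarith, by linarith⟩ hρ.le
      (integrableOn_excisedAngles hρ hf),
    intervalIntegral.integral_eq_sub_of_hasDerivAt (fun θ hθ => hF θ (hL θ hθ).1 (hL θ hθ).2)
      ((hf.mono fun θ hθ => (hL θ hθ).2).intervalIntegrable),
    intervalIntegral.integral_eq_sub_of_hasDerivAt (fun θ hθ => hF θ (hR θ hθ).1 (hR θ hθ).2)
      ((hf.mono fun θ hθ => (hR θ hθ).2).intervalIntegrable)]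

lemma tendsto_setIntegral_excisedAngles {x : ℝ} {h : ℝ → ℝ} (hx : x ∈ Icc (-1) 1)
    (hh : Continuous h) :
    Tendsto (fun ρ => ∫ θ in excisedAngles x ρ, h θ) (𝓝[>] 0) (𝓝 (∫ θ in 0..π, h θ)) := by
  set F : ℝ → ℝ := fun b => ∫ θ in 0..b, h θ
  have hF : Continuous F := intervalIntegral.continuous_primitive hh.intervalIntegrable 0
  have hlim : ∀ s : ℝ, Tendsto (fun ρ => F (arccos (x + s * ρ))) (𝓝[>] 0) (𝓝 (F (arccos x))) :=
    fun s => ((hF.comp (by fun_prop : Continuous fun ρ => arccos (x + s * ρ))).tendsto' 0 _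
      (by simp)).mono_left nhdsWithin_le_nhds
  have hsum := (hlim 1).add (tendsto_const_nhds (x := F π) |>.sub (hlim (-1)))
  rw [add_sub_cancel] at hsum
  refine hsum.congr' ?_
  filter_upwards [self_mem_nhdsWithin] with ρ hρ
  rw [setIntegral_excisedAngles hx (le_of_lt hρ)
      (hh.integrableOn_Icc.mono_set (excisedAngles_subset_Icc x ρ))]
  simp only [F, one_mul, neg_one_mul, ← sub_eq_add_neg]
  rw [intervalIntegral.integral_interval_sub_left (hh.intervalIntegrable _ _)
      (hh.intervalIntegrable _ _)]

/-- Since `Real.log` is `log |·|`, `invCosSubPrimitive φ / sin φ` is a primitive of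
`1 / (cos t - cos φ)` on both sides of `φ`. -/
noncomputable def invCosSubPrimitive (φ t : ℝ) : ℝ :=
  2 * log (sin ((t + φ) / 2)) - log (cos t - cos φ)

lemma hasDerivAt_invCosSubPrimitive {φ t : ℝ} (hsin : sin ((t + φ) / 2) ≠ 0)
    (hcos : cos t ≠ cos φ) :
    HasDerivAt (invCosSubPrimitive φ) (sin φ / (cos t - cos φ)) t := by
  have hne := sub_ne_zero.2 hcos
  have hd := ((((hasDerivAt_id t).add_const φ).div_const 2).sin.log hsin).const_mul 2 |>.sub
    (((hasDerivAt_cos t).sub_const (cos φ)).log hne)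
  refine hd.congr_deriv ?_
  simp only [id]
  field_simp
  have hA : t = 2 * ((t + φ) / 2) - φ := by ring
  set A := (t + φ) / 2
  rw [hA, cos_sub, sin_sub, cos_two_mul, sin_two_mul]
  linear_combination 2 * cos A * cos φ * sin_sq_add_cos_sq A

lemma invCosSubPrimitive_zero {φ : ℝ} (hφ : φ ∈ Ioo 0 π) : invCosSubPrimitive φ 0 = -log 2 := by
  have hs : sin (φ / 2) ≠ 0 :=
    (sin_pos_of_pos_of_lt_pi (by linarith [hφ.1]) (by linarith [hφ.2, pi_pos])).ne'
  have hcos : cos 0 - cos φ = 2 * sin (φ / 2) ^ 2 := by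
    have := cos_two_mul_eq_one_sub (φ / 2)
    rw [mul_div_cancel₀ φ two_ne_zero] at this
    rw [cos_zero, this]
    ring
  rw [invCosSubPrimitive, hcos, zero_add, log_mul two_ne_zero (pow_ne_zero 2 hs), log_pow]
  ring

lemma invCosSubPrimitive_pi {φ : ℝ} (hφ : φ ∈ Ioo 0 π) : invCosSubPrimitive φ π = -log 2 := by
  have hc : cos (φ / 2) ≠ 0 :=
    (cos_pos_of_mem_Ioo ⟨by linarith [hφ.1, pi_pos], by linarith [hφ.2]⟩).ne'
  have hcos : cos π - cos φ = -(2 * cos (φ / 2) ^ 2) := by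
    have := cos_two_mul (φ / 2)
    rw [mul_div_cancel₀ φ two_ne_zero] at this
    rw [cos_pi, this]
    ring
  rw [invCosSubPrimitive, hcos, log_neg_eq_log, log_mul two_ne_zero (pow_ne_zero 2 hc), log_pow,
    show (π + φ) / 2 = φ / 2 + π / 2 by ring, sin_add_pi_div_two]
  ring

lemma tendsto_setIntegral_excisedAngles_inv_cos_sub {x : ℝ} (hx : x ∈ Ioo (-1) 1) :
    Tendsto (fun ρ => ∫ θ in excisedAngles x ρ, (cos θ - x)⁻¹) (𝓝[>] 0) (𝓝 0) := by
  set φ := arccos x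
  have hφ : φ ∈ Ioo 0 π := ⟨arccos_pos.2 hx.2, arccos_lt_pi.2 hx.1⟩
  have hcosφ : cos φ = x := cos_arccos hx.1.le hx.2.le
  have hsinφ : 0 < sin φ := sin_pos_of_pos_of_lt_pi hφ.1 hφ.2
  have hG : ∀ θ ∈ Icc 0 π, cos θ ≠ x →
      HasDerivAt (invCosSubPrimitive φ) (sin φ / (cos θ - x)) θ := by
    intro θ hθ hne
    rw [← hcosφ] at hne ⊢
    exact hasDerivAt_invCosSubPrimitive
      (sin_pos_of_pos_of_lt_pi (by linarith [hθ.1, hφ.1]) (by linarith [hθ.2, hφ.2])).ne' hne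
  -- At `θ = arccos (x ± ρ)` the term `log |cos θ - x| = log ρ` is the same on both sides.
  set L := fun s => log (sin ((arccos (x + s) + φ) / 2))
  have hL : ContinuousAt L 0 := by
    refine ContinuousAt.log (by fun_prop) ?_
    simpa [L, φ] using hsinφ.ne'
  have hlim : Tendsto (fun ρ => (sin φ)⁻¹ * (2 * (L ρ - L (-ρ)))) (𝓝[>] 0) (𝓝 0) := by
    have hid : Tendsto (fun ρ : ℝ => ρ) (𝓝[>] 0) (𝓝 0) := nhdsWithin_le_nhds
    have hplus := hL.tendsto.comp hid
    have hminus := hL.tendsto.comp (by simpa using hid.neg)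
    simpa using ((hplus.sub hminus).const_mul 2).const_mul (sin φ)⁻¹
  refine hlim.congr' ?_
  filter_upwards [eventually_pos_and_add_le_one_and_neg_one_le_sub hx] with ρ ⟨hρ, hup, hlo⟩
  have hI := setIntegral_excisedAngles_eq_sub hρ hup hlo hG
    (by fun_prop (disch := simp_all [sub_eq_zero]))
  simp only [div_eq_mul_inv, integral_const_mul] at hI
  rw [eq_comm, eq_inv_mul_iff_mul_eq₀ hsinφ.ne', hI, invCosSubPrimitive_zero hφ,
    invCosSubPrimitive_pi hφ]
  simp only [invCosSubPrimitive, L, hcosφ, cos_arccos (by linarith : -1 ≤ x + ρ) hup,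
    cos_arccos hlo (by linarith : x - ρ ≤ 1), ← sub_eq_add_neg]
  rw [add_sub_cancel_left, show x - ρ - x = -ρ by ring, log_neg_eq_log]
  ring

lemma tendsto_setIntegral_excisedAngles_div_of_eq {x : ℝ} (hx : x ∈ Ioo (-1) 1)
    {f h g₁ g₂ : ℝ → ℝ} {a b L₁ L₂ : ℝ} (hh : Continuous h) (hg₁ : Continuous g₁)
    (hg₂ : Continuous g₂) (hf : ∀ θ, f θ = h θ * (cos θ - x) + a * g₁ θ + b * g₂ θ)
    (hL₁ : Tendsto (fun ρ => ∫ θ in excisedAngles x ρ, g₁ θ / (cos θ - x)) (𝓝[>] 0) (𝓝 L₁))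
    (hL₂ : Tendsto (fun ρ => ∫ θ in excisedAngles x ρ, g₂ θ / (cos θ - x)) (𝓝[>] 0) (𝓝 L₂)) :
    Tendsto (fun ρ => ∫ θ in excisedAngles x ρ, f θ / (cos θ - x)) (𝓝[>] 0)
      (𝓝 ((∫ θ in 0..π, h θ) + a * L₁ + b * L₂)) := by
  refine (((tendsto_setIntegral_excisedAngles (Ioo_subset_Icc_self hx) hh).add
    (hL₁.const_mul a)).add (hL₂.const_mul b)).congr' ?_
  filter_upwards [self_mem_nhdsWithin] with ρ hρ
  have hint : ∀ g : ℝ → ℝ, Continuous g →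
      IntegrableOn (fun θ => g θ / (cos θ - x)) (excisedAngles x ρ) := fun g hg =>
    integrableOn_excisedAngles hρ (by fun_prop (disch := simp_all [sub_eq_zero]))
  have hhT : IntegrableOn h (excisedAngles x ρ) :=
    hh.integrableOn_Icc.mono_set (excisedAngles_subset_Icc x ρ)
  symm
  rw [setIntegral_congr_fun (measurableSet_excisedAngles x ρ) (f := fun θ => f θ / (cos θ - x))
      (g := fun θ => h θ + a * (g₁ θ / (cos θ - x)) + b * (g₂ θ / (cos θ - x))) fun θ hθ => ?_,
    integral_add (f := fun θ => h θ + a * (g₁ θ / (cos θ - x)))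
      (hhT.add ((hint g₁ hg₁).const_mul a)) ((hint g₂ hg₂).const_mul b),
    integral_add hhT ((hint g₁ hg₁).const_mul a), integral_const_mul, integral_const_mul]
  have hne : cos θ - x ≠ 0 := abs_pos.1 ((le_of_lt hρ).trans_lt hθ.2)
  simp only [hf]
  field_simp

/-- Glauert's integral `p.v. ∫₀^π cos (m θ) / (cos θ - cos φ) dθ = π sin (m φ) / sin φ`. -/
theorem tendsto_setIntegral_excisedAngles_cos_nat_mul_div {x : ℝ} (hx : x ∈ Ioo (-1) 1)
    (m : ℕ) :
    Tendsto (fun ρ => ∫ θ in excisedAngles x ρ, cos (m * θ) / (cos θ - x)) (𝓝[>] 0)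
      (𝓝 (π * (Chebyshev.U ℝ ((m : ℤ) - 1)).eval x)) := by
  have h0 := tendsto_setIntegral_excisedAngles_inv_cos_sub hx
  induction m using Nat.twoStepInduction with
  | zero => simpa using h0
  | one =>
    have := tendsto_setIntegral_excisedAngles_div_of_eq hx (f := fun θ => cos ((1 : ℕ) * θ))
      (h := fun _ => 1) (g₁ := fun θ => cos ((0 : ℕ) * θ)) (g₂ := fun θ => cos ((0 : ℕ) * θ))
      (a := x) (b := 0) continuous_const (by fun_prop) (by fun_prop) (fun θ => by simp)
      (by simpa using h0) (by simpa using h0)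
    simpa using this
  | more m ih₀ ih₁ =>
    have := tendsto_setIntegral_excisedAngles_div_of_eq hx (f := fun θ => cos ((m + 2 : ℕ) * θ))
      (h := fun θ => 2 * cos ((m + 1 : ℕ) * θ)) (a := 2 * x) (b := -1) (by fun_prop)
      (by fun_prop) (by fun_prop) (fun θ => ?_) ih₁ ih₀
    · convert this using 2
      have hk : ((m + 1 : ℕ) : ℝ) ≠ 0 := by positivity
      rw [intervalIntegral.integral_const_mul,
        intervalIntegral.integral_comp_mul_left (fun θ => cos θ) hk, integral_cos, mul_zero,
        sin_zero, sin_nat_mul_pi, show ((m + 2 : ℕ) - 1 : ℤ) = (m - 1) + 2 by push_cast; ring,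
        Chebyshev.U_add_two]
      simp only [sub_add_cancel, eval_sub, eval_mul, eval_ofNat, eval_X, Nat.cast_add,
        Nat.cast_one, sub_self, smul_eq_mul, mul_zero, add_sub_cancel_right, zero_add]
      ring
    · push_cast
      have hadd := cos_add ((m + 1) * θ) θ
      have hsub := cos_sub ((m + 1) * θ) θ
      rw [show (m + 1) * θ + θ = (m + 2) * θ by ring] at hadd
      rw [show (m + 1) * θ - θ = m * θ by ring] at hsub
      linear_combination hadd + hsub

lemma setIntegral_excisedAngles_sin_mul_sin_div_sq {x ρ : ℝ} (hρ : 0 < ρ) (hup : x + ρ ≤ 1)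
    (hlo : -1 ≤ x - ρ) (m : ℕ) :
    ∫ θ in excisedAngles x ρ, sin (m * θ) * sin θ / (cos θ - x) ^ 2 =
      (sin (m * arccos (x + ρ)) + sin (m * arccos (x - ρ))) / ρ -
        m * ∫ θ in excisedAngles x ρ, cos (m * θ) / (cos θ - x) := by
  have hF : ∀ θ ∈ Icc 0 π, cos θ ≠ x → HasDerivAt (fun θ => sin (m * θ) / (cos θ - x))
      (sin (m * θ) * sin θ / (cos θ - x) ^ 2 + m * (cos (m * θ) / (cos θ - x))) θ := by
    intro θ _ hne
    have hne' := sub_ne_zero.2 hne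
    refine (((hasDerivAt_id θ).const_mul (m : ℝ)).sin.div ((hasDerivAt_cos θ).sub_const x)
      hne').congr_deriv ?_
    simp only [id]
    field_simp
    ring
  have hFTC := setIntegral_excisedAngles_eq_sub hρ hup hlo hF
    (by fun_prop (disch := simp_all [sub_eq_zero]))
  rw [integral_add
      (integrableOn_excisedAngles hρ (by fun_prop (disch := simp_all [sub_eq_zero])))
      ((integrableOn_excisedAngles hρ
        (by fun_prop (disch := simp_all [sub_eq_zero]))).const_mul _),
    integral_const_mul] at hFTC
  rw [eq_sub_iff_add_eq, hFTC, cos_arccos (by linarith) hup, cos_arccos hlo (by linarith),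
    sin_nat_mul_pi, show x - ρ - x = -ρ by ring]
  simp only [mul_zero, sin_zero, zero_div, div_neg]
  ring

lemma setIntegral_chebyshevU_mul_sqrt_div_sq (n : ℕ) (x ρ : ℝ) :
    ∫ y in {y | y ∈ Ioo (-1) 1 ∧ ρ < |y - x|},
        (Chebyshev.U ℝ n).eval y * √(1 - y ^ 2) / (y - x) ^ 2 =
      ∫ θ in excisedAngles x ρ, sin ((n + 1 : ℕ) * θ) * sin θ / (cos θ - x) ^ 2 := by
  rw [← cos_image_excisedAngles, integral_cos_image (measurableSet_excisedAngles x ρ)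
    (excisedAngles_subset_Icc x ρ)]
  refine setIntegral_congr_fun (measurableSet_excisedAngles x ρ) fun θ hθ => ?_
  have hθπ := excisedAngles_subset_Icc x ρ hθ
  rw [smul_eq_mul, mul_div_assoc',
    Chebyshev.U_real_eval_mul_sqrt ⟨neg_one_le_cos θ, cos_le_one θ⟩, arccos_cos hθπ.1 hθπ.2]
  push_cast
  ring

theorem hadamard_transform_weighted_chebyshevU (n : ℕ) (x : ℝ)
    (hx : x ∈ Set.Ioo (-1 : ℝ) 1) :
    Tendsto (fun ρ : ℝ =>
        (1 / Real.pi) *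
          ((∫ y in {y : ℝ | y ∈ Set.Ioo (-1 : ℝ) 1 ∧ ρ < |y - x|},
              (Polynomial.Chebyshev.U ℝ n).eval y * Real.sqrt (1 - y ^ 2) / (y - x) ^ 2)
            - 2 * ((Polynomial.Chebyshev.U ℝ n).eval x * Real.sqrt (1 - x ^ 2)) / ρ))
      (nhdsWithin 0 (Set.Ioi 0))
      (nhds (-(n + 1) * (Polynomial.Chebyshev.U ℝ n).eval x)) := by
  set K : ℝ := ((n + 1 : ℕ) : ℝ)
  have hsecond := (((hasDerivAt_arccos (by linarith [hx.1]) hx.2.ne).const_mul K).sin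
    |>.tendsto_second_difference_div).mono_left
    (nhdsWithin_mono _ fun t (ht : t ∈ Ioi 0) => ht.ne')
  have hglauert := tendsto_setIntegral_excisedAngles_cos_nat_mul_div hx (n + 1)
  have hlim := (hsecond.sub (hglauert.const_mul K)).const_mul (1 / π)
  rw [show ((n + 1 : ℕ) - 1 : ℤ) = n by push_cast; ring,
    show 1 / π * (0 - K * (π * (Chebyshev.U ℝ n).eval x)) = -(n + 1) * (Chebyshev.U ℝ n).eval x
      by simp only [K]; push_cast; field_simp; ring] at hlim
  refine hlim.congr' ?_
  filter_upwards [eventually_pos_and_add_le_one_and_neg_one_le_sub hx] with ρ ⟨hρ, hup, hlo⟩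
  rw [setIntegral_chebyshevU_mul_sqrt_div_sq,
    setIntegral_excisedAngles_sin_mul_sin_div_sq hρ hup hlo,
    Chebyshev.U_real_eval_mul_sqrt (Ioo_subset_Icc_self hx)]
  simp only [K, sub_eq_add_neg]
  push_cast
  ring
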